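/- Let I ⊆ K[x₁,…,xₙ] be a zero-dimensional ideal with ≻ a monomial ordering such that LM(I) is stable, and fix ℓ ∈ {1,…,n}. The map sending a monomial m ∈ K[x₁,…,x_{ℓ−1}] ∖ LM(I) to m·x_ℓ^{α(m)}, where α(m) = min{k : m·x_ℓ^k ∈ LM(I)}, is a bijection from the set of monomials in K[x₁,…,x_{ℓ−1}] not in LM(I) onto the set of leading monomials of reduced Gröbner basis elements lying in K[x₁,…,x_ℓ] but not in K[x₁,…,x_{ℓ−1}]. -/

import Mathlib

open MvPolynomial

/-- A monomial `μ` is the leading monomial of `f` with respect to the strict order `lt`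
on exponent vectors. -/
def IsLM {K : Type*} [Field K] {n : ℕ}
    (lt : (Fin n →₀ ℕ) → (Fin n →₀ ℕ) → Prop)
    (f : MvPolynomial (Fin n) K) (μ : Fin n →₀ ℕ) : Prop :=
  μ ∈ f.support ∧ ∀ ν ∈ f.support, ν = μ ∨ lt ν μ

/-- The set of leading monomials of nonzero elements of an ideal. -/
def LMset {K : Type*} [Field K] {n : ℕ}
    (lt : (Fin n →₀ ℕ) → (Fin n →₀ ℕ) → Prop)
    (I : Ideal (MvPolynomial (Fin n) K)) : Set (Fin n →₀ ℕ) :=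
  {μ | ∃ f ∈ I, IsLM lt f μ}

/-- A set of monomials is stable: if `m ∈ S` and `xᵢ ∣ m` then `(xⱼ·m)/xᵢ ∈ S`
for all `j < i`. -/
def StableSet {n : ℕ} (S : Set (Fin n →₀ ℕ)) : Prop :=
  ∀ μ ∈ S, ∀ i : Fin n, μ i ≠ 0 → ∀ j : Fin n, j < i →
    μ - Finsupp.single i 1 + Finsupp.single j 1 ∈ S

/-- `G` is the reduced Gröbner basis of `I` with respect to the monomial order `lt`. -/
def IsReducedGB {K : Type*} [Field K] {n : ℕ}
    (lt : (Fin n →₀ ℕ) → (Fin n →₀ ℕ) → Prop)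
    (I : Ideal (MvPolynomial (Fin n) K)) (G : Set (MvPolynomial (Fin n) K)) : Prop :=
  G.Finite ∧
  (∀ g ∈ G, g ≠ 0 ∧ g ∈ I) ∧
  (∀ f ∈ I, f ≠ 0 → ∃ g ∈ G, ∃ μ ν, IsLM lt g μ ∧ IsLM lt f ν ∧ μ ≤ ν) ∧
  (∀ g ∈ G, ∀ μ, IsLM lt g μ → g.coeff μ = 1) ∧
  (∀ g ∈ G, ∀ g' ∈ G, g ≠ g' → ∀ μ ν, IsLM lt g' μ → ν ∈ g.support → ¬ μ ≤ ν)

/-!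
The leading monomials of a reduced Gröbner basis are exactly the minimal elements of the
monomial ideal `LM(I)`, an upper set of `ℕⁿ`, so the statement is about stable upper sets.
Zero-dimensionality puts a pure power of `x_ℓ` into `LM(I)`, so `α(m)` is finite. If `ν ∈ LM(I)`
divides `m·x_ℓ^{α(m)}`, then `ν` has `x_ℓ`-degree `α(m)` by minimality of `α(m)`; if it lacked some
`x_k` of `m` (necessarily `k < ℓ`), stability would trade one `x_ℓ` of `ν` for `x_k` and put
`m·x_ℓ^{α(m)-1}` into `LM(I)`. So `m·x_ℓ^{α(m)}` is minimal, and a minimal `μ` of the given shape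
is recovered from `m = μ` with `x_ℓ` deleted.
-/

section LeadingMonomial

variable {K : Type*} [Field K] {n : ℕ} {lt : (Fin n →₀ ℕ) → (Fin n →₀ ℕ) → Prop}
  {f : MvPolynomial (Fin n) K} {μ ν : Fin n →₀ ℕ}

theorem IsLM.ne_zero (h : IsLM lt f μ) : f ≠ 0 := by
  rintro rfl
  simpa using h.1

theorem IsLM.unique (htrans : ∀ a b c, lt a b → lt b c → lt a c) (hirr : ∀ a, ¬ lt a a)
    (hμ : IsLM lt f μ) (hν : IsLM lt f ν) : μ = ν := by
  rcases hν.2 μ hμ.1 with h | h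
  · exact h
  · rcases hμ.2 ν hν.1 with h' | h'
    · exact h'.symm
    · exact absurd (htrans _ _ _ h h') (hirr _)

theorem exists_isLM (hlin : ∀ a b, a = b ∨ lt a b ∨ lt b a)
    (htrans : ∀ a b c, lt a b → lt b c → lt a c) (hirr : ∀ a, ¬ lt a a) (hf : f ≠ 0) :
    ∃ μ, IsLM lt f μ := by
  have : IsStrictOrder _ (flip lt) :=
    { irrefl := hirr, trans := fun _ _ _ h₁ h₂ => htrans _ _ _ h₂ h₁ }
  obtain ⟨μ₀, hμ₀⟩ := support_nonempty.2 hf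
  obtain ⟨⟨μ, hμ⟩, -, hmax⟩ :=
    (f.support.finite_toSet.wellFoundedOn (r := flip lt)).has_min Set.univ ⟨⟨μ₀, hμ₀⟩, trivial⟩
  exact ⟨μ, hμ, fun ν hν => (hlin ν μ).imp_right (Or.resolve_right · (hmax ⟨ν, hν⟩ trivial))⟩

theorem IsLM.monomial_one_mul (hadd : ∀ a b c, lt a b → lt (a + c) (b + c))
    (h : IsLM lt f μ) (δ : Fin n →₀ ℕ) : IsLM lt (monomial δ (1 : K) * f) (δ + μ) := by
  have hsupp : (monomial δ (1 : K) * f).support = f.support.map (addLeftEmbedding δ) :=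
    AddMonoidAlgebra.support_coeff_single_mul f 1 (by simp) δ
  rw [IsLM, hsupp]
  refine ⟨Finset.mem_map_of_mem _ h.1, ?_⟩
  simp only [Finset.mem_map, addLeftEmbedding_apply, forall_exists_index, and_imp]
  rintro _ σ hσ rfl
  rcases h.2 σ hσ with rfl | hlt
  · exact .inl rfl
  · exact .inr (by simpa only [add_comm δ] using hadd _ _ δ hlt)

theorem isUpperSet_LMset (hadd : ∀ a b c, lt a b → lt (a + c) (b + c))
    (I : Ideal (MvPolynomial (Fin n) K)) : IsUpperSet (LMset lt I) := by
  rintro μ _ hle ⟨f, hfI, hf⟩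
  obtain ⟨δ, rfl⟩ := exists_add_of_le hle
  exact ⟨monomial δ 1 * f, I.mul_mem_left _ hfI, add_comm μ δ ▸ hf.monomial_one_mul hadd δ⟩

theorem exists_single_mem_LMset (hlin : ∀ a b, a = b ∨ lt a b ∨ lt b a)
    (htrans : ∀ a b c, lt a b → lt b c → lt a c) (hirr : ∀ a, ¬ lt a a)
    {I : Ideal (MvPolynomial (Fin n) K)}
    (hI : FiniteDimensional K (MvPolynomial (Fin n) K ⧸ I)) (i : Fin n) :
    ∃ N : ℕ, Finsupp.single i N ∈ LMset lt I := by
  obtain ⟨q, hqI, hq⟩ : ∃ q : Polynomial K, q.toMvPolynomial i ∈ I ∧ q ≠ 0 := by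
    by_contra! h
    let φ := (Ideal.Quotient.mkₐ K I).comp (Polynomial.toMvPolynomial i)
    have hφ : Function.Injective φ :=
      (injective_iff_map_eq_zero φ).2 fun q hq => h q (Ideal.Quotient.eq_zero_iff_mem.1 hq)
    exact Polynomial.not_finite (Module.Finite.of_injective φ.toLinearMap hφ)
  obtain ⟨μ, hμ⟩ := exists_isLM hlin htrans hirr
    ((map_ne_zero_iff _ (Polynomial.toMvPolynomial_injective i)).2 hq)
  have hvars : (q.toMvPolynomial i).vars ⊆ {i} :=
    mem_supported.1 <| by
      rw [supported_eq_adjoin_X, Finset.coe_singleton, Set.image_singleton]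
      exact q.aeval_mem_adjoin_singleton K (X i)
  have hμi : μ.support ⊆ {i} := fun j hj => hvars ((mem_vars_iff_mem_support j).2 ⟨μ, hμ.1, hj⟩)
  exact ⟨μ i, _, hqI, Finsupp.support_subset_singleton.1 hμi ▸ hμ⟩

theorem IsReducedGB.exists_isLM_iff_minimal (htrans : ∀ a b c, lt a b → lt b c → lt a c)
    (hirr : ∀ a, ¬ lt a a) {I : Ideal (MvPolynomial (Fin n) K)}
    {G : Set (MvPolynomial (Fin n) K)} (hG : IsReducedGB lt I G) (μ : Fin n →₀ ℕ) :
    (∃ g ∈ G, IsLM lt g μ) ↔ Minimal (· ∈ LMset lt I) μ := by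
  obtain ⟨-, hGI, hdiv, -, hreduced⟩ := hG
  constructor
  · rintro ⟨g, hg, hgμ⟩
    refine ⟨⟨g, (hGI g hg).2, hgμ⟩, ?_⟩
    rintro ν ⟨f, hfI, hfν⟩ hνμ
    obtain ⟨g', hg', μ', ν', hg'μ', hfν', hμ'ν'⟩ := hdiv f hfI hfν.ne_zero
    obtain rfl := hfν'.unique htrans hirr hfν
    by_cases hgg' : g = g'
    · subst hgg'
      exact hgμ.unique htrans hirr hg'μ' ▸ hμ'ν'
    · exact absurd (hμ'ν'.trans hνμ) (hreduced g hg g' hg' hgg' μ' μ hg'μ' hgμ.1)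
  · rintro hmin
    obtain ⟨f, hfI, hfμ⟩ := hmin.1
    obtain ⟨g, hg, μ', ν', hgμ', hfν', hμ'ν'⟩ := hdiv f hfI hfμ.ne_zero
    obtain rfl := hfν'.unique htrans hirr hfμ
    exact ⟨g, hg, hmin.eq_of_le ⟨g, (hGI g hg).2, hgμ'⟩ hμ'ν' ▸ hgμ'⟩

end LeadingMonomial

section StableSet

variable {n : ℕ} {S : Set (Fin n →₀ ℕ)} {ℓ : Fin n}

theorem StableSet.minimal_add_single_sInf (hstable : StableSet S) (hS : IsUpperSet S)
    {m : Fin n →₀ ℕ} (hm : ∀ k, ℓ ≤ k → m k = 0) (hmS : m ∉ S)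
    (hne : {k : ℕ | m + Finsupp.single ℓ k ∈ S}.Nonempty) :
    Minimal (· ∈ S) (m + Finsupp.single ℓ (sInf {k : ℕ | m + Finsupp.single ℓ k ∈ S})) := by
  set α := sInf {k : ℕ | m + Finsupp.single ℓ k ∈ S}
  have hαS : m + Finsupp.single ℓ α ∈ S := Nat.sInf_mem hne
  have hα : α ≠ 0 := fun h => hmS (by simpa [h] using hαS)
  have hmℓ : m ℓ = 0 := hm ℓ le_rfl
  refine ⟨hαS, fun ν hνS hν => ge_of_eq ?_⟩
  have hνk : ∀ k ≠ ℓ, ν k ≤ m k := fun k hk => by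
    simpa [Finsupp.single_apply, Ne.symm hk] using hν k
  have hνℓ : ν ℓ = α := by
    refine le_antisymm (by simpa [hmℓ] using hν ℓ) (Nat.sInf_le (hS (fun k => ?_) hνS))
    rcases eq_or_ne k ℓ with rfl | hk
    · simp [hmℓ]
    · simpa [Finsupp.single_apply, Ne.symm hk] using hνk k hk
  ext k
  rcases eq_or_ne k ℓ with rfl | hk
  · simp [hmℓ, hνℓ]
  rw [Finsupp.add_apply, Finsupp.single_eq_of_ne hk, add_zero]
  refine (hνk k hk).antisymm ?_
  by_contra! hlt
  have hkℓ : k < ℓ := lt_of_not_ge fun h => by simp [hm k h] at hlt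
  have hshift := hstable ν hνS ℓ (hνℓ ▸ hα) k hkℓ
  have hα' : α - 1 ∈ {k : ℕ | m + Finsupp.single ℓ k ∈ S} := hS (fun j => ?_) hshift
  · exact absurd (Nat.sInf_le hα') (by omega)
  rcases eq_or_ne j ℓ with rfl | hjℓ
  · simp [hk, hmℓ, hνℓ]
  rcases eq_or_ne j k with rfl | hjk
  · simpa [hjℓ] using hlt
  · simpa [hjℓ, hjk] using hνk j hjℓ

theorem StableSet.bijOn_add_single_sInf (hstable : StableSet S) (hS : IsUpperSet S) {N : ℕ}
    (hN : Finsupp.single ℓ N ∈ S) :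
    Set.BijOn
      (fun m : Fin n →₀ ℕ => m + Finsupp.single ℓ (sInf {k : ℕ | m + Finsupp.single ℓ k ∈ S}))
      {m : Fin n →₀ ℕ | (∀ k : Fin n, ℓ ≤ k → m k = 0) ∧ m ∉ S}
      {μ : Fin n →₀ ℕ | Minimal (· ∈ S) μ ∧ (∀ k : Fin n, ℓ < k → μ k = 0) ∧ μ ℓ ≠ 0} := by
  have hne (m : Fin n →₀ ℕ) : {k : ℕ | m + Finsupp.single ℓ k ∈ S}.Nonempty :=
    ⟨N, hS le_add_self hN⟩
  refine ⟨?_, ?_, ?_⟩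
  · rintro m ⟨hm, hmS⟩
    have hmin := hstable.minimal_add_single_sInf hS hm hmS (hne m)
    refine ⟨hmin, fun k hk => by simp [hm k hk.le, hk.ne'], fun h => hmS ?_⟩
    have hαS : _ ∈ S := hmin.1
    rw [Finsupp.add_apply, hm ℓ le_rfl, zero_add, Finsupp.single_eq_same] at h
    rwa [h, Finsupp.single_zero, add_zero] at hαS
  · rintro m ⟨hm, -⟩ m' ⟨hm', -⟩ h
    simpa [Finsupp.erase_add, Finsupp.erase_of_notMem_support, hm ℓ le_rfl, hm' ℓ le_rfl]
      using congrArg (Finsupp.erase ℓ) h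
  · rintro μ ⟨hμ, hμ0, hμℓ⟩
    set m := μ.erase ℓ
    have hμm : m + Finsupp.single ℓ (μ ℓ) = μ := Finsupp.erase_add_single ℓ μ
    have hm (k : Fin n) (hk : ℓ ≤ k) : m k = 0 := by
      rcases hk.eq_or_lt with rfl | hk
      · exact Finsupp.erase_same
      · exact (Finsupp.erase_ne hk.ne').trans (hμ0 k hk)
    have hmS : m ∉ S := fun hmS =>
      hμℓ (hμ.eq_of_le hmS (hμm ▸ le_self_add) ▸ Finsupp.erase_same)
    have hμT : μ ℓ ∈ {k : ℕ | m + Finsupp.single ℓ k ∈ S} := by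
      show m + Finsupp.single ℓ (μ ℓ) ∈ S
      rw [hμm]
      exact hμ.1
    refine ⟨m, ⟨hm, hmS⟩, hμ.eq_of_le (Nat.sInf_mem ⟨_, hμT⟩) ?_⟩
    rw [← hμm]
    exact add_le_add le_rfl (Finsupp.single_le_single.2 (Nat.sInf_le hμT))

end StableSet

theorem stmt_4_general {K : Type*} [Field K] {n : ℕ}
    (lt : (Fin n →₀ ℕ) → (Fin n →₀ ℕ) → Prop)
    (hlin : ∀ a b, a = b ∨ lt a b ∨ lt b a)
    (htrans : ∀ a b c, lt a b → lt b c → lt a c)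
    (hirr : ∀ a, ¬ lt a a)
    (hadd : ∀ a b c, lt a b → lt (a + c) (b + c))
    (I : Ideal (MvPolynomial (Fin n) K))
    (hI : FiniteDimensional K (MvPolynomial (Fin n) K ⧸ I))
    (hstable : StableSet (LMset lt I))
    (G : Set (MvPolynomial (Fin n) K)) (hG : IsReducedGB lt I G)
    (ℓ : Fin n) :
    Set.BijOn
      (fun m : Fin n →₀ ℕ =>
        m + Finsupp.single ℓ (sInf {k : ℕ | m + Finsupp.single ℓ k ∈ LMset lt I}))
      {m : Fin n →₀ ℕ | (∀ k : Fin n, ℓ ≤ k → m k = 0) ∧ m ∉ LMset lt I}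
      {μ : Fin n →₀ ℕ | (∃ g ∈ G, IsLM lt g μ) ∧
        (∀ k : Fin n, ℓ < k → μ k = 0) ∧ μ ℓ ≠ 0} := by
  obtain ⟨N, hN⟩ := exists_single_mem_LMset hlin htrans hirr hI ℓ
  simp_rw [hG.exists_isLM_iff_minimal htrans hirr]
  exact hstable.bijOn_add_single_sInf (isUpperSet_LMset hadd I) hN

/-- the map `m ↦ m·x_ℓ^{α(m)}`, with `α(m) = min{k : m·x_ℓ^k ∈ LM(I)}`, is a
bijection from the monomials of `K[x₁,…,x_{ℓ−1}]` outside `LM(I)` onto the leading monomials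
of reduced Gröbner basis elements lying in `K[x₁,…,x_ℓ]` but not in `K[x₁,…,x_{ℓ−1}]`. -/
theorem stmt_4 {K : Type*} [Field K] {n : ℕ}
    (lt : (Fin n →₀ ℕ) → (Fin n →₀ ℕ) → Prop)
    (hlin : ∀ a b, a = b ∨ lt a b ∨ lt b a)
    (htrans : ∀ a b c, lt a b → lt b c → lt a c)
    (hirr : ∀ a, ¬ lt a a)
    (hadd : ∀ a b c, lt a b → lt (a + c) (b + c))
    (hzero : ∀ a : Fin n →₀ ℕ, a ≠ 0 → lt 0 a)
    (I : Ideal (MvPolynomial (Fin n) K))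
    (hI : FiniteDimensional K (MvPolynomial (Fin n) K ⧸ I))
    (hstable : StableSet (LMset lt I))
    (G : Set (MvPolynomial (Fin n) K)) (hG : IsReducedGB lt I G)
    (ℓ : Fin n) :
    Set.BijOn
      (fun m : Fin n →₀ ℕ =>
        m + Finsupp.single ℓ (sInf {k : ℕ | m + Finsupp.single ℓ k ∈ LMset lt I}))
      {m : Fin n →₀ ℕ | (∀ k : Fin n, ℓ ≤ k → m k = 0) ∧ m ∉ LMset lt I}
      {μ : Fin n →₀ ℕ | (∃ g ∈ G, IsLM lt g μ) ∧
        (∀ k : Fin n, ℓ < k → μ k = 0) ∧ μ ℓ ≠ 0} :=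
  stmt_4_general lt hlin htrans hirr hadd I hI hstable G hG ℓ
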